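/- Let δ > 1, e ∈ [0,1), and ω ∈ ℂ with |ω| = 1. Then for every twice continuously differentiable y : [0,2π] → ℂ with y(2π) = ω y(0), y′(2π) = ω y′(0), and y not identically zero, one has Re ∫₀^{2π} ( −y″(θ) − y(θ) + δ y(θ)/(1 + e cos θ) ) · conj(y(θ)) dθ > 0. That is, the operator 𝒜(δ,e) = −d²/dθ² − 1 + δ/(1 + e cos θ) is strictly positive on the domain D̄₁(ω,2π). -/

import Mathlib

/-!
The weight `c θ = 1 + e cos θ` is a positive `2π`-periodic solution of `c'' + c = 1`, i.e. a
ground state of `-d²/dθ² - 1 + 1/c`. Its logarithmic derivative `q = c'/c` solves the Riccati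
equation `q' + q² = 1/c - 1`, and with `V = q' + q²` one has pointwise
`Re((-y'' + V y) ȳ) = |y' - q y|² + (q |y|² - Re(y' ȳ))'`.
The bracket takes the same value at `0` and `2π`, because `q` is periodic and multiplication by
a unimodular `ω` preserves `|y|²` and `Re(y' ȳ)`. Hence the quadratic form of `𝒜(δ,e)` equals
`∫ |y' - q y|² + (δ - 1)/c |y|²`, which is positive as soon as `y ≢ 0`.
-/

open Real

open scoped RealInnerProductSpace

section Riccati

variable {E : Type*} [NormedAddCommGroup E] [InnerProductSpace ℝ E]

theorem hasDerivAt_riccati_flux {y y₁ : ℝ → E} {y₂ : E} {q : ℝ → ℝ} {q₁ t : ℝ}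
    (hy : HasDerivAt y (y₁ t) t) (hy₁ : HasDerivAt y₁ y₂ t) (hq : HasDerivAt q q₁ t) :
    HasDerivAt (fun s => q s * ‖y s‖ ^ 2 - ⟪y s, y₁ s⟫)
      (⟪y t, -y₂ + (q₁ + q t ^ 2) • y t⟫ - ‖y₁ t - q t • y t‖ ^ 2) t := by
  refine ((hq.mul hy.norm_sq).sub (hy.inner ℝ hy₁)).congr_deriv ?_
  rw [norm_sub_sq_real, norm_smul, inner_add_right, inner_neg_right, real_inner_smul_right,
    real_inner_smul_right, real_inner_self_eq_norm_sq, real_inner_self_eq_norm_sq,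
    real_inner_comm (y₁ t), Real.norm_eq_abs, mul_pow, sq_abs]
  ring

theorem integral_inner_neg_deriv_deriv_add_smul_eq {y : ℝ → E} {q V W : ℝ → ℝ} {L : ℝ}
    (hy : ContDiff ℝ 2 y) (hq : ∀ t, HasDerivAt q (V t - q t ^ 2) t)
    (hV : Continuous V) (hW : Continuous W)
    (hqL : q L = q 0) (hyL : ‖y L‖ = ‖y 0‖) (hy'L : ⟪y L, deriv y L⟫ = ⟪y 0, deriv y 0⟫) :
    ∫ t in 0..L, ⟪y t, -deriv (deriv y) t + (V t + W t) • y t⟫ =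
      ∫ t in 0..L, (‖deriv y t - q t • y t‖ ^ 2 + W t * ‖y t‖ ^ 2) := by
  have hy₀ : Continuous y := hy.continuous
  have hy₁ : Continuous (deriv y) := hy.continuous_deriv (by norm_num)
  have hqc : Continuous q := continuous_iff_continuousAt.2 fun t => (hq t).continuousAt
  have hflux : ∀ t, HasDerivAt (fun s => q s * ‖y s‖ ^ 2 - ⟪y s, deriv y s⟫)
      (⟪y t, -deriv (deriv y) t + (V t + W t) • y t⟫
        - (‖deriv y t - q t • y t‖ ^ 2 + W t * ‖y t‖ ^ 2)) t := by
    intro t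
    refine (hasDerivAt_riccati_flux ((hy.differentiable (by norm_num) t).hasDerivAt)
      ((hy.differentiable_deriv_two t).hasDerivAt) (hq t)).congr_deriv ?_
    simp only [inner_add_right, real_inner_smul_right, real_inner_self_eq_norm_sq]
    ring
  have hlhs : Continuous fun t => ⟪y t, -deriv (deriv y) t + (V t + W t) • y t⟫ := by fun_prop
  have hrhs : Continuous fun t => ‖deriv y t - q t • y t‖ ^ 2 + W t * ‖y t‖ ^ 2 := by fun_prop
  rw [← sub_eq_zero, ← intervalIntegral.integral_sub (hlhs.intervalIntegrable 0 L)
    (hrhs.intervalIntegrable 0 L), intervalIntegral.integral_eq_sub_of_hasDerivAt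
    (fun t _ => hflux t) ((hlhs.sub hrhs).intervalIntegrable 0 L), hqL, hyL, hy'L, sub_self]

theorem integral_inner_neg_deriv_deriv_add_smul_pos {y : ℝ → E} {q V W : ℝ → ℝ} {L : ℝ}
    (hy : ContDiff ℝ 2 y) (hq : ∀ t, HasDerivAt q (V t - q t ^ 2) t)
    (hV : Continuous V) (hW : Continuous W)
    (hqL : q L = q 0) (hyL : ‖y L‖ = ‖y 0‖) (hy'L : ⟪y L, deriv y L⟫ = ⟪y 0, deriv y 0⟫)
    (hL : 0 < L) (hW_pos : ∀ t ∈ Set.Icc 0 L, 0 < W t) (hne : ∃ t ∈ Set.Icc 0 L, y t ≠ 0) :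
    0 < ∫ t in 0..L, ⟪y t, -deriv (deriv y) t + (V t + W t) • y t⟫ := by
  rw [integral_inner_neg_deriv_deriv_add_smul_eq hy hq hV hW hqL hyL hy'L]
  obtain ⟨t₀, ht₀, hyt₀⟩ := hne
  have := hy.continuous
  have := hy.continuous_deriv (by norm_num)
  have : Continuous q := continuous_iff_continuousAt.2 fun t => (hq t).continuousAt
  refine intervalIntegral.integral_pos hL (Continuous.continuousOn (by fun_prop))
    (fun t ht => by have := hW_pos t (Set.Ioc_subset_Icc_self ht); positivity) ⟨t₀, ht₀, ?_⟩
  have := hW_pos t₀ ht₀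
  have := norm_pos_iff.2 hyt₀
  positivity

end Riccati

theorem hasDerivAt_div_riccati {φ φ₁ : ℝ → ℝ} {φ₂ t : ℝ} (hφ : HasDerivAt φ (φ₁ t) t)
    (hφ₁ : HasDerivAt φ₁ φ₂ t) (h : φ t ≠ 0) :
    HasDerivAt (fun s => φ₁ s / φ s) (φ₂ / φ t - (φ₁ t / φ t) ^ 2) t :=
  (hφ₁.div hφ h).congr_deriv (by field_simp)

theorem Complex.inner_mul_mul_of_norm_eq_one {ω : ℂ} (hω : ‖ω‖ = 1) (z w : ℂ) :
    ⟪ω * z, ω * w⟫ = ⟪z, w⟫ := by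
  have hωω : ω * (starRingEnd ℂ) ω = 1 := by
    rw [Complex.mul_conj, Complex.normSq_eq_norm_sq, hω]; norm_num
  rw [Complex.inner, Complex.inner, map_mul,
    show ω * w * ((starRingEnd ℂ) ω * (starRingEnd ℂ) z)
      = ω * (starRingEnd ℂ) ω * (w * (starRingEnd ℂ) z) by ring, hωω, one_mul]

theorem one_add_mul_cos_pos {e : ℝ} (he : |e| < 1) (t : ℝ) : 0 < 1 + e * cos t := by
  have : |e * cos t| < 1 := by
    rw [abs_mul]
    exact (mul_le_of_le_one_right (abs_nonneg e) (abs_cos_le_one t)).trans_lt he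
  linarith [neg_abs_le (e * cos t)]

/-- for `δ > 1`, `e ∈ [0,1)` and `|ω| = 1`, the operator
`𝒜(δ,e) = -d²/dθ² - 1 + δ/(1 + e cos θ)` is strictly positive on `D̄₁(ω,2π)`:
for every C² function `y` with `y(2π) = ω y(0)`, `y′(2π) = ω y′(0)`, not identically
zero on `[0,2π]`, we have `Re ∫₀^{2π} (𝒜(δ,e)y)(θ) conj(y(θ)) dθ > 0`. -/
theorem A_operator_positive (δ e : ℝ) (hδ : 1 < δ) (he0 : 0 ≤ e) (he1 : e < 1)
    (ω : ℂ) (hω : ‖ω‖ = 1)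
    (y : ℝ → ℂ) (hy : ContDiff ℝ 2 y)
    (hbc : y (2 * π) = ω * y 0)
    (hbc' : deriv y (2 * π) = ω * deriv y 0)
    (hne : ∃ θ ∈ Set.Icc (0:ℝ) (2 * π), y θ ≠ 0) :
    0 < (∫ θ in (0:ℝ)..(2 * π),
      (-(deriv (deriv y) θ) - y θ + (δ / (1 + e * Real.cos θ) : ℝ) * y θ)
        * (starRingEnd ℂ) (y θ)).re := by
  have hc : ∀ t, 0 < 1 + e * cos t := one_add_mul_cos_pos (abs_lt.2 ⟨by linarith, he1⟩)
  have hc_cont : Continuous fun t => 1 + e * cos t := by fun_prop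
  set q : ℝ → ℝ := fun t => -(e * sin t) / (1 + e * cos t)
  set V : ℝ → ℝ := fun t => -(e * cos t) / (1 + e * cos t)
  set W : ℝ → ℝ := fun t => (δ - 1) / (1 + e * cos t)
  have hq : ∀ t, HasDerivAt q (V t - q t ^ 2) t := fun t =>
    hasDerivAt_div_riccati (by simpa using ((hasDerivAt_cos t).const_mul e).const_add 1)
      ((hasDerivAt_sin t).const_mul e).neg (hc t).ne'
  have hintegrand : ∀ θ, ((-(deriv (deriv y) θ) - y θ + (δ / (1 + e * cos θ) : ℝ) * y θ)
      * (starRingEnd ℂ) (y θ)).re = ⟪y θ, -deriv (deriv y) θ + (V θ + W θ) • y θ⟫ := by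
    intro θ
    have hVW : V θ + W θ = δ / (1 + e * cos θ) - 1 := by
      have := (hc θ).ne'
      simp only [V, W]
      field_simp
      ring
    rw [Complex.inner, Complex.real_smul, hVW]
    push_cast
    ring_nf
  have hV : Continuous V :=
    (continuous_const.mul continuous_cos).neg.div hc_cont fun t => (hc t).ne'
  have hW : Continuous W := continuous_const.div hc_cont fun t => (hc t).ne'
  have hcomplex : Continuous fun θ => (-(deriv (deriv y) θ) - y θ
      + (δ / (1 + e * cos θ) : ℝ) * y θ) * (starRingEnd ℂ) (y θ) := by
    have := hy.continuous
    have := (hy.deriv' (n := 1)).continuous_deriv_one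
    have : Continuous fun θ => δ / (1 + e * cos θ) :=
      continuous_const.div hc_cont fun t => (hc t).ne'
    fun_prop
  rw [← Complex.reCLM_apply, ← Complex.reCLM.intervalIntegral_comp_comm
    (hcomplex.intervalIntegrable _ _)]
  simp only [Complex.reCLM_apply, hintegrand]
  exact integral_inner_neg_deriv_deriv_add_smul_pos hy hq hV hW (by simp [q])
    (by rw [hbc, norm_mul, hω, one_mul])
    (by rw [hbc, hbc', Complex.inner_mul_mul_of_norm_eq_one hω])
    (by positivity) (fun t _ => div_pos (by linarith) (hc t)) hne
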